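/- In ℝ⁸, the sum of squares of the 21 two-forms φ'_α, φ''_α, φ'''_α (α ∈ {i,j,k,e,f,g,h}) spanning the Λ²₂₁ component equals the negative of the sum of squares of the 7 two-forms φ_α spanning Λ²₇; equivalently, the sum of the squares of all 28 of these 2-forms vanishes. -/
import Mathlib


/-- The basis 1-forms `dx₁,…,dx₈` of `Λ¹ℝ⁸`, modeled in the exterior algebra of `ℝ⁸`
(indices shifted by one: `dx (a-1)` corresponds to `dxₐ`). -/
noncomputable def dx (a : Fin 8) : ExteriorAlgebra ℝ (Fin 8 → ℝ) :=
  ExteriorAlgebra.ι ℝ (Pi.single a 1)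

/-- `dx_{ab} = dxₐ ∧ dx_b`. -/
noncomputable def d (a b : Fin 8) : ExteriorAlgebra ℝ (Fin 8 → ℝ) := dx a * dx b


lemma dx_mul_self (a : Fin 8) : dx a * dx a = 0 := ExteriorAlgebra.ι_sq_zero _

lemma dx_swap (a b : Fin 8) : dx b * dx a = -(dx a * dx b) := by
  have h := ExteriorAlgebra.ι_add_mul_swap (R := ℝ)
    (Pi.single a 1 : Fin 8 → ℝ) (Pi.single b 1 : Fin 8 → ℝ)
  unfold dx
  exact eq_neg_of_add_eq_zero_right h

lemma d_mul_self (a b : Fin 8) : d a b * d a b = 0 := by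
  unfold d
  calc dx a * dx b * (dx a * dx b) = dx a * (dx b * dx a) * dx b := by noncomm_ring
    _ = dx a * (-(dx a * dx b)) * dx b := by rw [dx_swap]
    _ = -((dx a * dx a) * (dx b * dx b)) := by noncomm_ring
    _ = 0 := by rw [dx_mul_self]; simp

section
variable {A : Type*} [Ring A]

lemma grp1 (w x y z : A) (hw : w*w = 0) (hx : x*x = 0) (hy : y*y = 0) (hz : z*z = 0) :
    (w+x+y+z)^2 + (-w-x+y+z)^2 + (-w+x-y+z)^2 + (-w+x+y-z)^2 = 0 := by
  have h : (w+x+y+z)^2 + (-w-x+y+z)^2 + (-w+x-y+z)^2 + (-w+x+y-z)^2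
      = 4*(w*w) + 4*(x*x) + 4*(y*y) + 4*(z*z) := by noncomm_ring
  rw [h, hw, hx, hy, hz]; simp

lemma grp3 (w x y z : A) (hw : w*w = 0) (hx : x*x = 0) (hy : y*y = 0) (hz : z*z = 0) :
    (-w-x+y+z)^2 + (-w+x-y+z)^2 + (-w+x+y-z)^2 + (-w-x-y-z)^2 = 0 := by
  have h : (-w-x+y+z)^2 + (-w+x-y+z)^2 + (-w+x+y-z)^2 + (-w-x-y-z)^2
      = 4*(w*w) + 4*(x*x) + 4*(y*y) + 4*(z*z) := by noncomm_ring
  rw [h, hw, hx, hy, hz]; simp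
end

set_option maxHeartbeats 4000000 in
/-- In `ℝ⁸`, the sum of the squares of the `21` two-forms `φ'_α, φ''_α, φ'''_α`
(`α ∈ {i,j,k,e,f,g,h}`) spanning `Λ²₂₁` equals the negative of the sum of the squares
of the `7` two-forms `φ_α` spanning `Λ²₇`; equivalently, the sum of the squares of all
`28` of these 2-forms vanishes. -/
theorem sum_squares_28_kahler_forms_vanishes :
    (let φi := -d 0 1 + d 2 3 + d 4 5 - d 6 7
     let φj := -d 0 2 - d 1 3 + d 4 6 + d 5 7
     let φk := -d 0 3 + d 1 2 + d 4 7 - d 5 6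
     let φe := -d 0 4 - d 1 5 - d 2 6 - d 3 7
     let φf := -d 0 5 + d 1 4 - d 2 7 + d 3 6
     let φg := -d 0 6 + d 1 7 + d 2 4 - d 3 5
     let φh := -d 0 7 - d 1 6 + d 2 5 + d 3 4
     let φi' :=  d 0 1 + d 2 3 + d 4 5 + d 6 7
     let φi'' := -d 0 1 - d 2 3 + d 4 5 + d 6 7
     let φi''' := -d 0 1 + d 2 3 - d 4 5 + d 6 7
     let φj' :=  d 0 2 + d 1 3 + d 4 6 + d 5 7
     let φj'' := -d 0 2 + d 1 3 - d 4 6 + d 5 7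
     let φj''' := -d 0 2 + d 1 3 + d 4 6 - d 5 7
     let φk' :=  d 0 3 + d 1 2 + d 4 7 + d 5 6
     let φk'' := -d 0 3 - d 1 2 + d 4 7 + d 5 6
     let φk''' := -d 0 3 + d 1 2 - d 4 7 + d 5 6
     let φe' := -d 0 4 - d 1 5 + d 2 6 + d 3 7
     let φe'' := -d 0 4 + d 1 5 - d 2 6 + d 3 7
     let φe''' := -d 0 4 + d 1 5 + d 2 6 - d 3 7
     let φf' :=  d 0 5 + d 1 4 + d 2 7 + d 3 6
     let φf'' := -d 0 5 - d 1 4 + d 2 7 + d 3 6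
     let φf''' := -d 0 5 + d 1 4 + d 2 7 - d 3 6
     let φg' :=  d 0 6 + d 1 7 + d 2 4 + d 3 5
     let φg'' := -d 0 6 - d 1 7 + d 2 4 + d 3 5
     let φg''' := -d 0 6 + d 1 7 - d 2 4 + d 3 5
     let φh' :=  d 0 7 + d 1 6 + d 2 5 + d 3 4
     let φh'' := -d 0 7 + d 1 6 - d 2 5 + d 3 4
     let φh''' := -d 0 7 + d 1 6 + d 2 5 - d 3 4
     (φi' ^ 2 + φi'' ^ 2 + φi''' ^ 2 + φj' ^ 2 + φj'' ^ 2 + φj''' ^ 2 +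
        φk' ^ 2 + φk'' ^ 2 + φk''' ^ 2 + φe' ^ 2 + φe'' ^ 2 + φe''' ^ 2 +
        φf' ^ 2 + φf'' ^ 2 + φf''' ^ 2 + φg' ^ 2 + φg'' ^ 2 + φg''' ^ 2 +
        φh' ^ 2 + φh'' ^ 2 + φh''' ^ 2 =
       -(φi ^ 2 + φj ^ 2 + φk ^ 2 + φe ^ 2 + φf ^ 2 + φg ^ 2 + φh ^ 2)) ∧
     (φi' ^ 2 + φi'' ^ 2 + φi''' ^ 2 + φj' ^ 2 + φj'' ^ 2 + φj''' ^ 2 +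
        φk' ^ 2 + φk'' ^ 2 + φk''' ^ 2 + φe' ^ 2 + φe'' ^ 2 + φe''' ^ 2 +
        φf' ^ 2 + φf'' ^ 2 + φf''' ^ 2 + φg' ^ 2 + φg'' ^ 2 + φg''' ^ 2 +
        φh' ^ 2 + φh'' ^ 2 + φh''' ^ 2 +
        φi ^ 2 + φj ^ 2 + φk ^ 2 + φe ^ 2 + φf ^ 2 + φg ^ 2 + φh ^ 2 = 0)) := by
  
  dsimp only
  have hi := grp1 (d 0 1) (d 2 3) (d 4 5) (d 6 7) (d_mul_self 0 1) (d_mul_self 2 3) (d_mul_self 4 5) (d_mul_self 6 7)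
  have hj := grp1 (d 0 2) (d 1 3) (d 4 6) (d 5 7) (d_mul_self 0 2) (d_mul_self 1 3) (d_mul_self 4 6) (d_mul_self 5 7)
  have hk := grp1 (d 0 3) (d 1 2) (d 4 7) (d 5 6) (d_mul_self 0 3) (d_mul_self 1 2) (d_mul_self 4 7) (d_mul_self 5 6)
  have he := grp3 (d 0 4) (d 1 5) (d 2 6) (d 3 7) (d_mul_self 0 4) (d_mul_self 1 5) (d_mul_self 2 6) (d_mul_self 3 7)
  have hf := grp1 (d 0 5) (d 1 4) (d 2 7) (d 3 6) (d_mul_self 0 5) (d_mul_self 1 4) (d_mul_self 2 7) (d_mul_self 3 6)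
  have hg := grp1 (d 0 6) (d 1 7) (d 2 4) (d 3 5) (d_mul_self 0 6) (d_mul_self 1 7) (d_mul_self 2 4) (d_mul_self 3 5)
  have hh := grp1 (d 0 7) (d 1 6) (d 2 5) (d 3 4) (d_mul_self 0 7) (d_mul_self 1 6) (d_mul_self 2 5) (d_mul_self 3 4)
  constructor
  · rw [eq_neg_iff_add_eq_zero]
    calc _ = ((d 0 1 + d 2 3 + d 4 5 + d 6 7)^2 + (-d 0 1 - d 2 3 + d 4 5 + d 6 7)^2 + (-d 0 1 + d 2 3 - d 4 5 + d 6 7)^2 + (-d 0 1 + d 2 3 + d 4 5 - d 6 7)^2) + ((d 0 2 + d 1 3 + d 4 6 + d 5 7)^2 + (-d 0 2 - d 1 3 + d 4 6 + d 5 7)^2 + (-d 0 2 + d 1 3 - d 4 6 + d 5 7)^2 + (-d 0 2 + d 1 3 + d 4 6 - d 5 7)^2) + ((d 0 3 + d 1 2 + d 4 7 + d 5 6)^2 + (-d 0 3 - d 1 2 + d 4 7 + d 5 6)^2 + (-d 0 3 + d 1 2 - d 4 7 + d 5 6)^2 + (-d 0 3 + d 1 2 + d 4 7 - d 5 6)^2)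 + ((-d 0 4 - d 1 5 + d 2 6 + d 3 7)^2 + (-d 0 4 + d 1 5 - d 2 6 + d 3 7)^2 + (-d 0 4 + d 1 5 + d 2 6 - d 3 7)^2 + (-d 0 4 - d 1 5 - d 2 6 - d 3 7)^2) + ((d 0 5 + d 1 4 + d 2 7 + d 3 6)^2 + (-d 0 5 - d 1 4 + d 2 7 + d 3 6)^2 + (-d 0 5 + d 1 4 - d 2 7 + d 3 6)^2 + (-d 0 5 + d 1 4 + d 2 7 - d 3 6)^2) + ((d 0 6 + d 1 7 + d 2 4 + d 3 5)^2 + (-d 0 6 - d 1 7 + d 2 4 + d 3 5)^2 + (-d 0 6 + d 1 7 - d 2 4 + d 3 5)^2 + (-d 0 6 + d 1 7 + d 2 4 - d 3 5)^2) + ((d 0 7 + d 1 6 + d 2 5 + d 3 4)^2 + (-d 0 7 - d 1 6 + d 2 5 + d 3 4)^2 + (-d 0 7 + d 1 6 - d 2 5 + d 3 4)^2 + (-d 0 7 + d 1 6 + d 2 5 - d 3 4)^2) := by abel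
      _ = (0:ExteriorAlgebra ℝ (Fin 8 → ℝ)) := by rw [hi, hj, hk, he, hf, hg, hh]; simp
  · calc _ = ((d 0 1 + d 2 3 + d 4 5 + d 6 7)^2 + (-d 0 1 - d 2 3 + d 4 5 + d 6 7)^2 + (-d 0 1 + d 2 3 - d 4 5 + d 6 7)^2 + (-d 0 1 + d 2 3 + d 4 5 - d 6 7)^2) + ((d 0 2 + d 1 3 + d 4 6 + d 5 7)^2 + (-d 0 2 - d 1 3 + d 4 6 + d 5 7)^2 + (-d 0 2 + d 1 3 - d 4 6 + d 5 7)^2 + (-d 0 2 + d 1 3 + d 4 6 - d 5 7)^2) + ((d 0 3 + d 1 2 + d 4 7 + d 5 6)^2 + (-d 0 3 - d 1 2 + d 4 7 + d 5 6)^2 + (-d 0 3 + d 1 2 - d 4 7 + d 5 6)^2 + (-d 0 3 + d 1 2 + d 4 7 - d 5 6)^2) + ((-d 0 4 - d 1 5 + d 2 6 + d 3 7)^2 + (-d 0 4 + d 1 5 - d 2 6 + d 3 7)^2 + (-d 0 4 + d 1 5 + d 2 6 - d 3 7)^2 + (-d 0 4 - d 1 5 - d 2 6 - d 3 7)^2)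 + ((d 0 5 + d 1 4 + d 2 7 + d 3 6)^2 + (-d 0 5 - d 1 4 + d 2 7 + d 3 6)^2 + (-d 0 5 + d 1 4 - d 2 7 + d 3 6)^2 + (-d 0 5 + d 1 4 + d 2 7 - d 3 6)^2) + ((d 0 6 + d 1 7 + d 2 4 + d 3 5)^2 + (-d 0 6 - d 1 7 + d 2 4 + d 3 5)^2 + (-d 0 6 + d 1 7 - d 2 4 + d 3 5)^2 + (-d 0 6 + d 1 7 + d 2 4 - d 3 5)^2) + ((d 0 7 + d 1 6 + d 2 5 + d 3 4)^2 + (-d 0 7 - d 1 6 + d 2 5 + d 3 4)^2 + (-d 0 7 + d 1 6 - d 2 5 + d 3 4)^2 + (-d 0 7 + d 1 6 + d 2 5 - d 3 4)^2) := by abel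
      _ = (0:ExteriorAlgebra ℝ (Fin 8 → ℝ)) := by rw [hi, hj, hk, he, hf, hg, hh]; simp
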